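/- arXiv:2410.14420 — 3 statements merged into one kernel-verified Lean document; each statement's English description precedes it below -/
import Mathlib

section
/- Let H be a probability measure supported in [h₁, h₂] with 0 < h₁ ≤ h₂ < ∞, and X ∈ ℂ with Im(X) ≠ 0. Then Im(∫ τ^{-1}/(τX+1) dH(τ)) / Im(∫ 1/(τX+1) dH(τ)) = (∫ 1/|τX+1|² dH(τ)) / (∫ τ/|τX+1|² dH(τ)), and this ratio lies in [1/h₂, 1/h₁]. -/
/-!
For real `τ` one has `Im (1 / (τX + 1)) = -Im X · τ / |τX + 1|²` and, for `τ ≠ 0`,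
`Im (τ⁻¹ / (τX + 1)) = -Im X / |τX + 1|²`. Integrating against `H`, the common factor `-Im X`
cancels from the ratio of imaginary parts, which leaves `A / B` with
`A = ∫ 1 / |τX + 1|² dH` and `B = ∫ τ / |τX + 1|² dH`. Since `h₁ ≤ τ ≤ h₂` on the support of `H`,
`h₁ A ≤ B ≤ h₂ A`, and `A > 0` because `τX + 1` never vanishes when `Im X ≠ 0`.
-/

open MeasureTheory Set

theorem integral_pos_of_forall_pos {α : Type*} [MeasurableSpace α] {μ : Measure α} [NeZero μ]
    {f : α → ℝ} (hf : ∀ x, 0 < f x) (hfi : Integrable f μ) : 0 < ∫ x, f x ∂μ := by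
  rw [integral_pos_iff_support_of_nonneg (fun x ↦ (hf x).le) hfi,
    Function.support_eq_univ fun x ↦ (hf x).ne']
  exact (NeZero.ne (μ univ)).bot_lt

theorem ContinuousOn.integrable_of_ae_mem {α E : Type*} [TopologicalSpace α] [T2Space α]
    [MeasurableSpace α] [OpensMeasurableSpace α] [NormedAddCommGroup E]
    {μ : Measure α} [IsFiniteMeasureOnCompacts μ] {K : Set α} {f : α → E}
    (hf : ContinuousOn f K) (hK : IsCompact K) (hμK : ∀ᵐ x ∂μ, x ∈ K) : Integrable f μ := by
  have hfK : IntegrableOn f K μ := hf.integrableOn_compact hK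
  rwa [IntegrableOn, Measure.restrict_eq_self_of_ae_mem hμK] at hfK

theorem integral_div_integral_mul_mem_Icc {μ : Measure ℝ} {w : ℝ → ℝ} {a b : ℝ} (ha : 0 < a)
    (hmem : ∀ᵐ τ ∂μ, τ ∈ Icc a b) (hw0 : ∀ τ, 0 ≤ w τ) (hw : Integrable w μ)
    (hτw : Integrable (fun τ ↦ τ * w τ) μ) (hpos : 0 < ∫ τ, w τ ∂μ) :
    (∫ τ, w τ ∂μ) / (∫ τ, τ * w τ ∂μ) ∈ Icc (1 / b) (1 / a) := by
  set A := ∫ τ, w τ ∂μ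
  set B := ∫ τ, τ * w τ ∂μ
  have hlower : a * A ≤ B := by
    rw [← integral_const_mul]
    refine integral_mono_ae (hw.const_mul a) hτw ?_
    filter_upwards [hmem] with τ hτ using mul_le_mul_of_nonneg_right hτ.1 (hw0 τ)
  have hupper : B ≤ b * A := by
    rw [← integral_const_mul]
    refine integral_mono_ae hτw (hw.const_mul b) ?_
    filter_upwards [hmem] with τ hτ using mul_le_mul_of_nonneg_right hτ.2 (hw0 τ)
  have hB : 0 < B := (mul_pos ha hpos).trans_le hlower
  have hb : 0 < b := pos_of_mul_pos_left (hB.trans_le hupper) hpos.le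
  constructor
  · rw [div_le_div_iff₀ hb hB]
    linarith
  · rw [div_le_div_iff₀ hB ha]
    linarith

namespace Complex

theorem ofReal_mul_add_one_ne_zero {X : ℂ} (hX : X.im ≠ 0) (τ : ℝ) : (τ : ℂ) * X + 1 ≠ 0 := by
  intro h
  have him := congrArg im h
  have hre := congrArg re h
  simp only [add_im, im_ofReal_mul, one_im, add_zero, zero_im, mul_eq_zero, hX, or_false] at him
  simp [him] at hre

theorem im_one_div_ofReal_mul_add_one (X : ℂ) (τ : ℝ) :
    (1 / ((τ : ℂ) * X + 1)).im = -X.im * (τ / ‖(τ : ℂ) * X + 1‖ ^ 2) := by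
  rw [Complex.sq_norm]
  simp only [one_div, inv_im, add_im, mul_im, ofReal_re, ofReal_im, zero_mul, add_zero, one_im]
  ring

theorem im_inv_div_ofReal_mul_add_one (X : ℂ) {τ : ℝ} (hτ : τ ≠ 0) :
    ((τ : ℂ)⁻¹ / ((τ : ℂ) * X + 1)).im = -X.im * (1 / ‖(τ : ℂ) * X + 1‖ ^ 2) := by
  rw [div_eq_mul_one_div, ← ofReal_inv, im_ofReal_mul, im_one_div_ofReal_mul_add_one]
  field_simp

end Complex

theorem im_integral_one_div_ofReal_mul_add_one {μ : Measure ℝ} (X : ℂ)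
    (hint : Integrable (fun τ : ℝ ↦ 1 / ((τ : ℂ) * X + 1)) μ) :
    (∫ τ, 1 / ((τ : ℂ) * X + 1) ∂μ).im = -X.im * ∫ τ, τ / ‖(τ : ℂ) * X + 1‖ ^ 2 ∂μ := calc
  _ = ∫ τ, (1 / ((τ : ℂ) * X + 1)).im ∂μ := (integral_im hint).symm
  _ = ∫ τ, -X.im * (τ / ‖(τ : ℂ) * X + 1‖ ^ 2) ∂μ :=
    integral_congr_ae (ae_of_all _ (Complex.im_one_div_ofReal_mul_add_one X))
  _ = _ := integral_const_mul _ _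

theorem im_integral_inv_div_ofReal_mul_add_one {μ : Measure ℝ} (X : ℂ)
    (hint : Integrable (fun τ : ℝ ↦ (τ : ℂ)⁻¹ / ((τ : ℂ) * X + 1)) μ) (h0 : ∀ᵐ τ ∂μ, τ ≠ 0) :
    (∫ τ, (τ : ℂ)⁻¹ / ((τ : ℂ) * X + 1) ∂μ).im = -X.im * ∫ τ, 1 / ‖(τ : ℂ) * X + 1‖ ^ 2 ∂μ := calc
  _ = ∫ τ, ((τ : ℂ)⁻¹ / ((τ : ℂ) * X + 1)).im ∂μ := (integral_im hint).symm
  _ = ∫ τ, -X.im * (1 / ‖(τ : ℂ) * X + 1‖ ^ 2) ∂μ := integral_congr_ae <| by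
    filter_upwards [h0] with τ hτ using Complex.im_inv_div_ofReal_mul_add_one X hτ
  _ = _ := integral_const_mul _ _

theorem stmt7_general (h₁ h₂ : ℝ) (hh₁ : 0 < h₁)
    (H : Measure ℝ) [IsProbabilityMeasure H] (hsupp : H (Set.Icc h₁ h₂)ᶜ = 0)
    (X : ℂ) (hX : X.im ≠ 0) :
    (∫ τ : ℝ, ((τ : ℂ))⁻¹ / ((τ : ℂ) * X + 1) ∂H).im
        / (∫ τ : ℝ, 1 / ((τ : ℂ) * X + 1) ∂H).im
      = (∫ τ : ℝ, 1 / (‖(τ : ℂ) * X + 1‖) ^ 2 ∂H)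
        / (∫ τ : ℝ, τ / (‖(τ : ℂ) * X + 1‖) ^ 2 ∂H) ∧
    (∫ τ : ℝ, 1 / (‖(τ : ℂ) * X + 1‖) ^ 2 ∂H)
        / (∫ τ : ℝ, τ / (‖(τ : ℂ) * X + 1‖) ^ 2 ∂H)
      ∈ Set.Icc (1 / h₂) (1 / h₁) := by
  have hae : ∀ᵐ τ ∂H, τ ∈ Icc h₁ h₂ := ae_iff.mpr hsupp
  have hint {E : Type} [NormedAddCommGroup E] {f : ℝ → E} (hf : ContinuousOn f (Icc h₁ h₂)) :
      Integrable f H := hf.integrable_of_ae_mem isCompact_Icc hae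
  have hne := Complex.ofReal_mul_add_one_ne_zero hX
  have hnorm_pos (τ : ℝ) : 0 < ‖(τ : ℂ) * X + 1‖ ^ 2 := pow_pos (norm_pos_iff.mpr (hne τ)) 2
  have hw_pos (τ : ℝ) : 0 < 1 / ‖(τ : ℂ) * X + 1‖ ^ 2 := one_div_pos.mpr (hnorm_pos τ)
  have hw_cont : Continuous fun τ : ℝ ↦ 1 / ‖(τ : ℂ) * X + 1‖ ^ 2 :=
    continuous_const.div (by fun_prop) fun τ ↦ (hnorm_pos τ).ne'
  have hτ_ne : ∀ τ ∈ Icc h₁ h₂, (τ : ℂ) ≠ 0 := fun τ hτ ↦ mod_cast (hh₁.trans_le hτ.1).ne'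
  have hF_im := im_integral_inv_div_ofReal_mul_add_one X
    (hint ((Complex.continuous_ofReal.continuousOn.inv₀ hτ_ne).div (by fun_prop) fun τ _ ↦ hne τ))
    (by filter_upwards [hae] with τ hτ using (hh₁.trans_le hτ.1).ne')
  have hG_im := im_integral_one_div_ofReal_mul_add_one X
    (hint (continuous_const.div (by fun_prop) hne).continuousOn)
  refine ⟨by rw [hF_im, hG_im, mul_div_mul_left _ _ (neg_ne_zero.mpr hX)], ?_⟩
  have hτw_eq : (fun τ : ℝ ↦ τ / ‖(τ : ℂ) * X + 1‖ ^ 2) =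
      fun τ : ℝ ↦ τ * (1 / ‖(τ : ℂ) * X + 1‖ ^ 2) :=
    funext fun τ ↦ (mul_one_div _ _).symm
  rw [hτw_eq]
  have hw := hint hw_cont.continuousOn
  exact integral_div_integral_mul_mem_Icc hh₁ hae (fun τ ↦ (hw_pos τ).le) hw
    (hint (continuous_id.mul hw_cont).continuousOn) (integral_pos_of_forall_pos hw_pos hw)

/-- The oracle precision shrinkage function t expressed via the boundary value X. -/
theorem stmt7 (h₁ h₂ : ℝ) (hh₁ : 0 < h₁) (h12 : h₁ ≤ h₂)
    (H : Measure ℝ) [IsProbabilityMeasure H] (hsupp : H (Set.Icc h₁ h₂)ᶜ = 0)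
    (X : ℂ) (hX : X.im ≠ 0) :
    (∫ τ : ℝ, ((τ : ℂ))⁻¹ / ((τ : ℂ) * X + 1) ∂H).im
        / (∫ τ : ℝ, 1 / ((τ : ℂ) * X + 1) ∂H).im
      = (∫ τ : ℝ, 1 / (‖(τ : ℂ) * X + 1‖) ^ 2 ∂H)
        / (∫ τ : ℝ, τ / (‖(τ : ℂ) * X + 1‖) ^ 2 ∂H) ∧
    (∫ τ : ℝ, 1 / (‖(τ : ℂ) * X + 1‖) ^ 2 ∂H)
        / (∫ τ : ℝ, τ / (‖(τ : ℂ) * X + 1‖) ^ 2 ∂H)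
      ∈ Set.Icc (1 / h₂) (1 / h₁) :=
  stmt7_general h₁ h₂ hh₁ H hsupp X hX
end

section
/- Let H be a probability measure supported in [h₁, h₂], 0 < h₁ ≤ h₂ < ∞, c > 0, and D a probability measure supported in [d₁, d₂], 0 < d₁ ≤ d₂ < ∞. Fix z ∈ ℂ with Im(z) > 0. Then the equation X = -∫ δ / (z - δ c ∫ τ/(τX + 1) dH(τ)) dD(δ) has at most one solution X with Im(X) > 0. -/
/-!
Write `m(X) = ∫ τ / (τX + 1) dH` and `w(δ) = z - δ c m(X)`. Taking imaginary parts in the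
equation gives `Im X · (1 - c A B) = Im z ∫ δ / |w|² dD > 0`, where
`A = ∫ δ² / |w|² dD` and `B = ∫ τ² / |τX + 1|² dH`; hence `c A B < 1` for every solution.
For two solutions, the resolvent identity applied to both integrals gives
`X₁ - X₂ = c (X₁ - X₂) Q P` with `Q = ∫ τ² / ((τX₁ + 1)(τX₂ + 1)) dH` and
`P = ∫ δ² / (w₁ w₂) dD`, and Cauchy–Schwarz bounds `c |Q| |P|` by
`√(c A₁ B₁) √(c A₂ B₂) < 1`, forcing `X₁ = X₂`.
-/

open MeasureTheory

theorem norm_integral_mul_le_sqrt_mul_sqrt {α 𝕜 : Type*} [MeasurableSpace α] [RCLike 𝕜]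
    {μ : Measure α} {f g : α → 𝕜} (hf : MemLp f 2 μ) (hg : MemLp g 2 μ) :
    ‖∫ a, f a * g a ∂μ‖ ≤ √(∫ a, ‖f a‖ ^ 2 ∂μ) * √(∫ a, ‖g a‖ ^ 2 ∂μ) := by
  have hpow : ∀ h : α → 𝕜, (∫ a, ‖h a‖ ^ (2 : ℝ) ∂μ) ^ (1 / (2 : ℝ)) = √(∫ a, ‖h a‖ ^ 2 ∂μ) :=
    fun h => by simp_rw [Real.rpow_two, Real.sqrt_eq_rpow]
  calc ‖∫ a, f a * g a ∂μ‖ ≤ ∫ a, ‖f a‖ * ‖g a‖ ∂μ := by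
        simpa only [norm_mul] using norm_integral_le_integral_norm (fun a => f a * g a)
    _ ≤ _ := integral_mul_norm_le_Lp_mul_Lq .two_two (by simpa using hf) (by simpa using hg)
    _ = _ := by rw [hpow, hpow]

theorem integral_pos_of_ae_pos {α : Type*} [MeasurableSpace α] {μ : Measure α} [NeZero μ]
    {f : α → ℝ} (hf : ∀ᵐ a ∂μ, 0 < f a) (hfi : Integrable f μ) : 0 < ∫ a, f a ∂μ := by
  rw [integral_pos_iff_support_of_nonneg_ae (hf.mono fun _ h => h.le) hfi, pos_iff_ne_zero]
  exact fun h => frequently_ae_iff.1 hf.frequently (measure_mono_null (fun _ ha => ha.ne') h)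

theorem integral_complex_im {α : Type*} [MeasurableSpace α] {μ : Measure α} {f : α → ℂ}
    (hf : Integrable f μ) : ∫ a, (f a).im ∂μ = (∫ a, f a ∂μ).im :=
  integral_im hf

namespace WeightedMarcenkoPastur

noncomputable def hKernel (X : ℂ) (τ : ℝ) : ℂ := τ / (τ * X + 1)

noncomputable def dKernel (z : ℂ) (c : ℝ) (m : ℂ) (δ : ℝ) : ℂ := δ / (z - δ * c * m)

section hKernel

variable {X : ℂ}

theorem im_ofReal_mul_add_one (τ : ℝ) : ((τ : ℂ) * X + 1).im = τ * X.im := by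
  simp

theorem ofReal_mul_add_one_ne_zero (hX : 0 < X.im) (τ : ℝ) : (τ : ℂ) * X + 1 ≠ 0 := by
  rcases eq_or_ne τ 0 with rfl | hτ
  · simp
  · intro h
    simpa [hτ, hX.ne'] using congrArg Complex.im h

theorem norm_hKernel_le (hX : 0 < X.im) (τ : ℝ) : ‖hKernel X τ‖ ≤ X.im⁻¹ := by
  have hden : |τ| * X.im ≤ ‖(τ : ℂ) * X + 1‖ := by
    simpa [abs_mul, abs_of_pos hX] using Complex.abs_im_le_norm ((τ : ℂ) * X + 1)
  rw [hKernel, norm_div, Complex.norm_real, Real.norm_eq_abs,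
    div_le_iff₀ (norm_pos_iff.2 (ofReal_mul_add_one_ne_zero hX τ))]
  calc |τ| = X.im⁻¹ * (|τ| * X.im) := by field_simp
    _ ≤ X.im⁻¹ * ‖(τ : ℂ) * X + 1‖ := by gcongr

theorem im_hKernel (X : ℂ) (τ : ℝ) : (hKernel X τ).im = -X.im * ‖hKernel X τ‖ ^ 2 := by
  rw [hKernel, Complex.div_im, norm_div, div_pow, Complex.norm_real, ← Complex.normSq_eq_norm_sq,
    Real.norm_eq_abs, sq_abs, im_ofReal_mul_add_one]
  simp only [Complex.ofReal_re, Complex.ofReal_im]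
  ring

theorem memLp_hKernel {H : Measure ℝ} [IsFiniteMeasure H] (hX : 0 < X.im) (p : ENNReal) :
    MemLp (hKernel X) p H :=
  MemLp.of_bound (by unfold hKernel; exact (by fun_prop : Measurable _).aestronglyMeasurable) _
    (ae_of_all _ (norm_hKernel_le hX))

theorem im_integral_hKernel {H : Measure ℝ} [IsFiniteMeasure H] (hX : 0 < X.im) :
    (∫ τ, hKernel X τ ∂H).im = -X.im * ∫ τ, ‖hKernel X τ‖ ^ 2 ∂H := by
  rw [← integral_complex_im ((memLp_hKernel hX 1).integrable le_rfl), ← integral_const_mul]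
  exact integral_congr_ae (ae_of_all _ (im_hKernel X))

theorem im_integral_hKernel_nonpos {H : Measure ℝ} [IsFiniteMeasure H] (hX : 0 < X.im) :
    (∫ τ, hKernel X τ ∂H).im ≤ 0 := by
  rw [im_integral_hKernel hX, neg_mul]
  exact neg_nonpos.2 (mul_nonneg hX.le (integral_nonneg fun _ => sq_nonneg _))

end hKernel

section dKernel

variable {z : ℂ} {c : ℝ} {m : ℂ} {δ : ℝ}

theorem im_le_im_sub_mul (hδ : 0 ≤ δ) (hc : 0 ≤ c) (hm : m.im ≤ 0) :
    z.im ≤ (z - δ * c * m).im := by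
  have : δ * c * m.im ≤ 0 := mul_nonpos_of_nonneg_of_nonpos (mul_nonneg hδ hc) hm
  simp only [Complex.sub_im, Complex.mul_im, Complex.mul_re, Complex.ofReal_re, Complex.ofReal_im]
  linarith

theorem im_le_norm_sub_mul (hδ : 0 ≤ δ) (hc : 0 ≤ c) (hm : m.im ≤ 0) :
    z.im ≤ ‖z - δ * c * m‖ :=
  (im_le_im_sub_mul hδ hc hm).trans (Complex.im_le_norm _)

theorem sub_mul_ne_zero (hz : 0 < z.im) (hδ : 0 ≤ δ) (hc : 0 ≤ c) (hm : m.im ≤ 0) :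
    z - δ * c * m ≠ 0 :=
  norm_pos_iff.1 (hz.trans_le (im_le_norm_sub_mul hδ hc hm))

theorem norm_dKernel_le (hz : 0 < z.im) (hδ : 0 ≤ δ) (hc : 0 ≤ c) (hm : m.im ≤ 0) :
    ‖dKernel z c m δ‖ ≤ δ / z.im := by
  rw [dKernel, norm_div, Complex.norm_real, Real.norm_eq_abs, abs_of_nonneg hδ]
  exact div_le_div_of_nonneg_left hδ hz (im_le_norm_sub_mul hδ hc hm)

theorem neg_im_dKernel (z : ℂ) (c : ℝ) (m : ℂ) (δ : ℝ) :
    -(dKernel z c m δ).im =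
      z.im * (δ / Complex.normSq (z - δ * c * m)) - c * m.im * ‖dKernel z c m δ‖ ^ 2 := by
  rw [dKernel, Complex.div_im, norm_div, div_pow, Complex.norm_real, ← Complex.normSq_eq_norm_sq,
    Real.norm_eq_abs, sq_abs]
  simp only [Complex.sub_im, Complex.mul_im, Complex.mul_re, Complex.ofReal_re, Complex.ofReal_im]
  ring

theorem memLp_dKernel {D : Measure ℝ} [IsFiniteMeasure D] {d : ℝ}
    (hD : ∀ᵐ δ ∂D, δ ∈ Set.Icc 0 d) (hz : 0 < z.im) (hc : 0 ≤ c) (hm : m.im ≤ 0)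
    (p : ENNReal) : MemLp (dKernel z c m) p D := by
  refine MemLp.of_bound (by unfold dKernel; exact (by fun_prop : Measurable _).aestronglyMeasurable)
    (d / z.im) ?_
  filter_upwards [hD] with δ hδ
  exact (norm_dKernel_le hz hδ.1 hc hm).trans (by gcongr; exact hδ.2)

end dKernel

section Solution

variable {H D : Measure ℝ} [IsFiniteMeasure H] [IsFiniteMeasure D] {c d : ℝ} {z X : ℂ}

theorem mul_integral_sq_norm_dKernel_mul_lt_one [NeZero D] (hD : ∀ᵐ δ ∂D, δ ∈ Set.Ioc 0 d)
    (hc : 0 ≤ c) (hz : 0 < z.im) (hX : 0 < X.im)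
    (hsol : X = -∫ δ, dKernel z c (∫ τ, hKernel X τ ∂H) δ ∂D) :
    c * (∫ δ, ‖dKernel z c (∫ τ, hKernel X τ ∂H) δ‖ ^ 2 ∂D) * ∫ τ, ‖hKernel X τ‖ ^ 2 ∂H < 1 := by
  set m := ∫ τ, hKernel X τ ∂H
  set B := ∫ τ, ‖hKernel X τ‖ ^ 2 ∂H
  have hm : m.im = -X.im * B := im_integral_hKernel hX
  have hm_nonpos : m.im ≤ 0 := im_integral_hKernel_nonpos hX
  have hg : MemLp (dKernel z c m) 2 D :=
    memLp_dKernel (hD.mono fun _ h => Set.Ioc_subset_Icc_self h) hz hc hm_nonpos 2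
  have hg1 : Integrable (dKernel z c m) D := hg.integrable one_le_two
  have hg2 : Integrable (fun δ => ‖dKernel z c m δ‖ ^ 2) D :=
    (memLp_two_iff_integrable_sq_norm hg.1).1 hg
  have hgim : Integrable (fun δ => -(dKernel z c m δ).im) D := hg1.im.neg
  have him : ∫ δ, (dKernel z c m δ).im ∂D = -X.im := by
    rw [integral_complex_im hg1, hsol, Complex.neg_im, neg_neg]
  -- the imaginary part of the equation: Im X = Im z ∫ δ / |z - δ c m|² + c Im X A B
  have hpos : 0 < ∫ δ, (-(dKernel z c m δ).im - c * X.im * B * ‖dKernel z c m δ‖ ^ 2) ∂D := by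
    refine integral_pos_of_ae_pos ?_ (hgim.sub (hg2.const_mul _))
    filter_upwards [hD] with δ hδ
    rw [neg_im_dKernel, hm]
    have hw := Complex.normSq_pos.2 (sub_mul_ne_zero hz hδ.1.le hc hm_nonpos)
    linarith [mul_pos hz (div_pos hδ.1 hw)]
  rw [integral_sub hgim (hg2.const_mul _), integral_neg, him, integral_const_mul] at hpos
  nlinarith

end Solution

section Difference

variable {H D : Measure ℝ} [IsFiniteMeasure H] [IsFiniteMeasure D] {c d : ℝ} {z X₁ X₂ : ℂ}

theorem integral_hKernel_sub (hX₁ : 0 < X₁.im) (hX₂ : 0 < X₂.im) :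
    ∫ τ, hKernel X₁ τ ∂H - ∫ τ, hKernel X₂ τ ∂H =
      -(X₁ - X₂) * ∫ τ, hKernel X₁ τ * hKernel X₂ τ ∂H := by
  rw [← integral_sub ((memLp_hKernel hX₁ 1).integrable le_rfl)
    ((memLp_hKernel hX₂ 1).integrable le_rfl), ← integral_const_mul]
  refine integral_congr_ae (ae_of_all _ fun τ => ?_)
  have := ofReal_mul_add_one_ne_zero hX₁ τ
  have := ofReal_mul_add_one_ne_zero hX₂ τ
  simp only [hKernel]
  field_simp
  ring

theorem integral_dKernel_sub {m₁ m₂ : ℂ} (hD : ∀ᵐ δ ∂D, δ ∈ Set.Icc 0 d) (hz : 0 < z.im)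
    (hc : 0 ≤ c) (hm₁ : m₁.im ≤ 0) (hm₂ : m₂.im ≤ 0) :
    ∫ δ, dKernel z c m₁ δ ∂D - ∫ δ, dKernel z c m₂ δ ∂D =
      c * (m₁ - m₂) * ∫ δ, dKernel z c m₁ δ * dKernel z c m₂ δ ∂D := by
  rw [← integral_sub ((memLp_dKernel hD hz hc hm₁ 1).integrable le_rfl)
    ((memLp_dKernel hD hz hc hm₂ 1).integrable le_rfl), ← integral_const_mul]
  refine integral_congr_ae (hD.mono fun δ hδ => ?_)
  have := sub_mul_ne_zero hz hδ.1 hc hm₁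
  have := sub_mul_ne_zero hz hδ.1 hc hm₂
  simp only [dKernel]
  field_simp
  ring

theorem norm_mul_integral_mul_lt_one [NeZero D] (hD : ∀ᵐ δ ∂D, δ ∈ Set.Ioc 0 d)
    (hc : 0 ≤ c) (hz : 0 < z.im) (hX₁ : 0 < X₁.im) (hX₂ : 0 < X₂.im)
    (hsol₁ : X₁ = -∫ δ, dKernel z c (∫ τ, hKernel X₁ τ ∂H) δ ∂D)
    (hsol₂ : X₂ = -∫ δ, dKernel z c (∫ τ, hKernel X₂ τ ∂H) δ ∂D) :
    ‖(c : ℂ) * (∫ τ, hKernel X₁ τ * hKernel X₂ τ ∂H) *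
      ∫ δ, dKernel z c (∫ τ, hKernel X₁ τ ∂H) δ * dKernel z c (∫ τ, hKernel X₂ τ ∂H) δ ∂D‖
      < 1 := by
  have hD' : ∀ᵐ δ ∂D, δ ∈ Set.Icc 0 d := hD.mono fun _ h => Set.Ioc_subset_Icc_self h
  set A₁ := ∫ δ, ‖dKernel z c (∫ τ, hKernel X₁ τ ∂H) δ‖ ^ 2 ∂D
  set A₂ := ∫ δ, ‖dKernel z c (∫ τ, hKernel X₂ τ ∂H) δ‖ ^ 2 ∂D
  set B₁ := ∫ τ, ‖hKernel X₁ τ‖ ^ 2 ∂H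
  set B₂ := ∫ τ, ‖hKernel X₂ τ‖ ^ 2 ∂H
  have hQ := norm_integral_mul_le_sqrt_mul_sqrt (memLp_hKernel (H := H) hX₁ 2) (memLp_hKernel hX₂ 2)
  have hP := norm_integral_mul_le_sqrt_mul_sqrt
    (memLp_dKernel hD' hz hc (im_integral_hKernel_nonpos (H := H) hX₁) 2)
    (memLp_dKernel hD' hz hc (im_integral_hKernel_nonpos (H := H) hX₂) 2)
  have h₁ := mul_integral_sq_norm_dKernel_mul_lt_one hD hc hz hX₁ hsol₁
  have h₂ := mul_integral_sq_norm_dKernel_mul_lt_one hD hc hz hX₂ hsol₂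
  have hA₁ : 0 ≤ A₁ := integral_nonneg fun _ => sq_nonneg _
  have hA₂ : 0 ≤ A₂ := integral_nonneg fun _ => sq_nonneg _
  have hB₁ : 0 ≤ B₁ := integral_nonneg fun _ => sq_nonneg _
  have hB₂ : 0 ≤ B₂ := integral_nonneg fun _ => sq_nonneg _
  have hbound : c * (√B₁ * √B₂) * (√A₁ * √A₂) < 1 := by
    rw [← sq_lt_one_iff₀ (by positivity)]
    calc (c * (√B₁ * √B₂) * (√A₁ * √A₂)) ^ 2 = (c * A₁ * B₁) * (c * A₂ * B₂) := by
          simp only [mul_pow, Real.sq_sqrt hA₁, Real.sq_sqrt hA₂, Real.sq_sqrt hB₁,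
            Real.sq_sqrt hB₂]
          ring
      _ < 1 := mul_lt_one_of_nonneg_of_lt_one_left (by positivity) h₁ h₂.le
  rw [norm_mul, norm_mul, Complex.norm_real, Real.norm_eq_abs, abs_of_nonneg hc]
  calc _ ≤ c * (√B₁ * √B₂) * (√A₁ * √A₂) := by gcongr
    _ < 1 := hbound

end Difference

end WeightedMarcenkoPastur

open WeightedMarcenkoPastur in
theorem stmt8_general (d₁ d₂ : ℝ)
    (hd₁ : 0 < d₁) (c : ℝ) (hc : 0 < c)
    (H : Measure ℝ) [IsProbabilityMeasure H]
    (D : Measure ℝ) [IsProbabilityMeasure D] (hDsupp : D (Set.Icc d₁ d₂)ᶜ = 0)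
    (z : ℂ) (hz : 0 < z.im) :
    ∀ X₁ X₂ : ℂ, 0 < X₁.im → 0 < X₂.im →
      X₁ = -∫ δ : ℝ, (δ : ℂ) /
          (z - (δ : ℂ) * (c : ℂ) * ∫ τ : ℝ, (τ : ℂ) / ((τ : ℂ) * X₁ + 1) ∂H) ∂D →
      X₂ = -∫ δ : ℝ, (δ : ℂ) /
          (z - (δ : ℂ) * (c : ℂ) * ∫ τ : ℝ, (τ : ℂ) / ((τ : ℂ) * X₂ + 1) ∂H) ∂D →
      X₁ = X₂ := by
  intro X₁ X₂ hX₁ hX₂ hsol₁ hsol₂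
  change X₁ = -∫ δ, dKernel z c (∫ τ, hKernel X₁ τ ∂H) δ ∂D at hsol₁
  change X₂ = -∫ δ, dKernel z c (∫ τ, hKernel X₂ τ ∂H) δ ∂D at hsol₂
  have hD : ∀ᵐ δ ∂D, δ ∈ Set.Ioc 0 d₂ :=
    Filter.Eventually.mono (mem_ae_iff.2 hDsupp) fun _ hδ => ⟨hd₁.trans_le hδ.1, hδ.2⟩
  have hdiff : X₁ - X₂ = (X₁ - X₂) * ((c : ℂ) * (∫ τ, hKernel X₁ τ * hKernel X₂ τ ∂H) *
      ∫ δ, dKernel z c (∫ τ, hKernel X₁ τ ∂H) δ * dKernel z c (∫ τ, hKernel X₂ τ ∂H) δ ∂D) := by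
    calc X₁ - X₂ = -(∫ δ, dKernel z c (∫ τ, hKernel X₁ τ ∂H) δ ∂D -
          ∫ δ, dKernel z c (∫ τ, hKernel X₂ τ ∂H) δ ∂D) := by
          conv_lhs => rw [hsol₁, hsol₂]
          ring
      _ = _ := by
          rw [integral_dKernel_sub (hD.mono fun _ h => Set.Ioc_subset_Icc_self h) hz hc.le
            (im_integral_hKernel_nonpos hX₁) (im_integral_hKernel_nonpos hX₂),
            integral_hKernel_sub hX₁ hX₂]
          ring
  have hlt := norm_mul_integral_mul_lt_one hD hc.le hz hX₁ hX₂ hsol₁ hsol₂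
  have hnorm := congrArg norm hdiff
  rw [norm_mul] at hnorm
  exact sub_eq_zero.1 (norm_eq_zero.1 (by nlinarith [norm_nonneg (X₁ - X₂)]))

/-- Uniqueness in ℂ₊ of the solution of the fundamental equation. -/
theorem stmt8 (h₁ h₂ d₁ d₂ : ℝ) (hh₁ : 0 < h₁) (h12 : h₁ ≤ h₂)
    (hd₁ : 0 < d₁) (hd12 : d₁ ≤ d₂) (c : ℝ) (hc : 0 < c)
    (H : Measure ℝ) [IsProbabilityMeasure H] (hHsupp : H (Set.Icc h₁ h₂)ᶜ = 0)
    (D : Measure ℝ) [IsProbabilityMeasure D] (hDsupp : D (Set.Icc d₁ d₂)ᶜ = 0)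
    (z : ℂ) (hz : 0 < z.im) :
    ∀ X₁ X₂ : ℂ, 0 < X₁.im → 0 < X₂.im →
      X₁ = -∫ δ : ℝ, (δ : ℂ) /
          (z - (δ : ℂ) * (c : ℂ) * ∫ τ : ℝ, (τ : ℂ) / ((τ : ℂ) * X₁ + 1) ∂H) ∂D →
      X₂ = -∫ δ : ℝ, (δ : ℂ) /
          (z - (δ : ℂ) * (c : ℂ) * ∫ τ : ℝ, (τ : ℂ) / ((τ : ℂ) * X₂ + 1) ∂H) ∂D →
      X₁ = X₂ :=
  stmt8_general d₁ d₂ hd₁ c hc H D hDsupp z hz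
end

section
/- Let Σ be an n×n Hermitian positive semidefinite matrix and U an n×n unitary matrix with columns u₁,…,uₙ. Among all matrices of the form U D U* with D = Diag(d₁,…,dₙ) real diagonal, the Frobenius norm ‖U D U* - Σ‖ is minimized uniquely by d_i = u_i* Σ u_i for each i. -/
/-!
Conjugating by the unitary `U` preserves the Frobenius norm, so the loss of `U D Uᴴ` equals
`‖D - Uᴴ S U‖²`. Only the diagonal entries of this difference depend on `D`, and they vanish
exactly when `dᵢ = (Uᴴ S U)ᵢᵢ`.
-/

open Matrix ComplexOrder

namespace Matrix

variable {n 𝕜 : Type*} [RCLike 𝕜]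

theorem re_trace_mul_conjTranspose_self [Fintype n] (A : Matrix n n 𝕜) :
    RCLike.re (A * Aᴴ).trace = ∑ i, ∑ j, ‖A i j‖ ^ 2 := by
  simp only [trace, diag, mul_apply, conjTranspose_apply, RCLike.star_def, RCLike.mul_conj,
    map_sum]
  norm_cast

theorem trace_unitary_conj_mul_conjTranspose [Fintype n] [DecidableEq n] {U : Matrix n n 𝕜}
    (hU : U ∈ unitaryGroup n 𝕜) (A : Matrix n n 𝕜) :
    (U * A * Uᴴ * (U * A * Uᴴ)ᴴ).trace = (A * Aᴴ).trace := by
  have hUU : Uᴴ * U = 1 := mem_unitaryGroup_iff'.mp hU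
  calc (U * A * Uᴴ * (U * A * Uᴴ)ᴴ).trace = (U * (A * Aᴴ) * Uᴴ).trace := by
        simp only [conjTranspose_mul, conjTranspose_conjTranspose, Matrix.mul_assoc]
        rw [← Matrix.mul_assoc Uᴴ U, hUU, Matrix.one_mul]
    _ = (A * Aᴴ).trace := by rw [trace_mul_comm, ← Matrix.mul_assoc, hUU, Matrix.one_mul]

theorem unitary_conj_diagonal_sub [Fintype n] [DecidableEq n] {U : Matrix n n 𝕜}
    (hU : U ∈ unitaryGroup n 𝕜) (c : n → 𝕜) (S : Matrix n n 𝕜) :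
    U * diagonal c * Uᴴ - S = U * (diagonal c - Uᴴ * S * U) * Uᴴ := by
  have hUU : U * Uᴴ = 1 := mem_unitaryGroup_iff.mp hU
  calc U * diagonal c * Uᴴ - S = U * diagonal c * Uᴴ - (U * Uᴴ) * S * (U * Uᴴ) := by
        rw [hUU, Matrix.one_mul, Matrix.mul_one]
    _ = U * (diagonal c - Uᴴ * S * U) * Uᴴ := by noncomm_ring

theorem norm_sq_diagonal_sub_apply [DecidableEq n] (c : n → 𝕜) (A : Matrix n n 𝕜) (i j : n) :
    ‖(diagonal c - A) i j‖ ^ 2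
      = ‖(diagonal A.diag - A) i j‖ ^ 2 + if i = j then ‖c i - A i i‖ ^ 2 else 0 := by
  rcases eq_or_ne i j with rfl | hij
  · simp
  · simp [hij]

theorem sum_norm_sq_diagonal_sub [Fintype n] [DecidableEq n] (c : n → 𝕜) (A : Matrix n n 𝕜) :
    ∑ i, ∑ j, ‖(diagonal c - A) i j‖ ^ 2
      = ∑ i, ∑ j, ‖(diagonal A.diag - A) i j‖ ^ 2 + ∑ i, ‖c i - A i i‖ ^ 2 := by
  simp only [norm_sq_diagonal_sub_apply c A, Finset.sum_add_distrib, Finset.sum_ite_eq,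
    Finset.mem_univ, if_true]

end Matrix

theorem stmt16_general (n : ℕ) (S U : Matrix (Fin n) (Fin n) ℂ)
    (hU : U ∈ Matrix.unitaryGroup (Fin n) ℂ)
    (dstar : Fin n → ℂ) (hdstar : ∀ i, dstar i = (Uᴴ * S * U) i i) :
    ∀ d : Fin n → ℝ,
      (Matrix.trace ((U * Matrix.diagonal dstar * Uᴴ - S) *
          (U * Matrix.diagonal dstar * Uᴴ - S)ᴴ)).re
        ≤ (Matrix.trace ((U * Matrix.diagonal (fun i => (d i : ℂ)) * Uᴴ - S) *
          (U * Matrix.diagonal (fun i => (d i : ℂ)) * Uᴴ - S)ᴴ)).re ∧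
      ((Matrix.trace ((U * Matrix.diagonal (fun i => (d i : ℂ)) * Uᴴ - S) *
          (U * Matrix.diagonal (fun i => (d i : ℂ)) * Uᴴ - S)ᴴ)).re
        = (Matrix.trace ((U * Matrix.diagonal dstar * Uᴴ - S) *
          (U * Matrix.diagonal dstar * Uᴴ - S)ᴴ)).re
        → ∀ i, (d i : ℂ) = dstar i) := by
  intro d
  have hloss : ∀ c : Fin n → ℂ,
      ((U * diagonal c * Uᴴ - S) * (U * diagonal c * Uᴴ - S)ᴴ).trace.re
        = ∑ i, ∑ j, ‖(diagonal c - Uᴴ * S * U) i j‖ ^ 2 := fun c => by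
    rw [← RCLike.re_to_complex, unitary_conj_diagonal_sub hU,
      trace_unitary_conj_mul_conjTranspose hU, re_trace_mul_conjTranspose_self]
  have hdiag : dstar = (Uᴴ * S * U).diag := funext hdstar
  rw [hloss, hloss, sum_norm_sq_diagonal_sub (fun i => (d i : ℂ)), ← hdiag]
  have hgap : 0 ≤ ∑ i, ‖(d i : ℂ) - (Uᴴ * S * U) i i‖ ^ 2 := by positivity
  refine ⟨le_add_of_nonneg_right hgap, fun heq i => ?_⟩
  have hzero := (Finset.sum_eq_zero_iff_of_nonneg fun i _ => by positivity).mp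
    (add_eq_left.mp heq) i (Finset.mem_univ i)
  rw [hdstar i, ← sub_eq_zero, ← norm_eq_zero]
  exact pow_eq_zero_iff two_ne_zero |>.mp hzero

/-- Oracle rotation-invariant covariance estimator: among rotation-invariant estimators
U D U* with D real diagonal, the Frobenius loss ‖UDU* - S‖² = Re Tr((UDU*-S)(UDU*-S)*)
is minimized uniquely by dᵢ = uᵢ* S uᵢ = (U* S U)ᵢᵢ. -/
theorem stmt16 (n : ℕ) (S U : Matrix (Fin n) (Fin n) ℂ)
    (hS : S.IsHermitian) (hpsd : S.PosSemidef)
    (hU : U ∈ Matrix.unitaryGroup (Fin n) ℂ)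
    (dstar : Fin n → ℂ) (hdstar : ∀ i, dstar i = (Uᴴ * S * U) i i) :
    ∀ d : Fin n → ℝ,
      (Matrix.trace ((U * Matrix.diagonal dstar * Uᴴ - S) *
          (U * Matrix.diagonal dstar * Uᴴ - S)ᴴ)).re
        ≤ (Matrix.trace ((U * Matrix.diagonal (fun i => (d i : ℂ)) * Uᴴ - S) *
          (U * Matrix.diagonal (fun i => (d i : ℂ)) * Uᴴ - S)ᴴ)).re ∧
      ((Matrix.trace ((U * Matrix.diagonal (fun i => (d i : ℂ)) * Uᴴ - S) *
          (U * Matrix.diagonal (fun i => (d i : ℂ)) * Uᴴ - S)ᴴ)).re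
        = (Matrix.trace ((U * Matrix.diagonal dstar * Uᴴ - S) *
          (U * Matrix.diagonal dstar * Uᴴ - S)ᴴ)).re
        → ∀ i, (d i : ℂ) = dstar i) :=
  stmt16_general n S U hU dstar hdstar
end
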